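/- arXiv:1410.0099 — 3 statements merged into one kernel-verified Lean document; each statement's English description precedes it below -/
import Mathlib

section
/- Let (V,P) be a mixing Markov chain with induced stationary measure μ on V^ℕ, and let Δ_n = Σ_{u ∈ V_n} μ(u)². Define Q(u,v) = P(u,v)² and let λ be the Perron eigenvalue (spectral radius) of Q. Then lim_{n→∞} (1/n)·log Δ_n = log λ. -/
open Finset Filter
open scoped ENNReal

noncomputable section

variable {V : Type*}

/-- `P` is a stochastic transition matrix. -/
def IsStochastic [Fintype V] (P : Matrix V V ℝ) : Prop :=
  (∀ u v, 0 ≤ P u v) ∧ ∀ u, ∑ v, P u v = 1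

/-- The chain `(V,P)` is mixing: some power of `P` has all entries positive. -/
def IsMixing [Fintype V] [DecidableEq V] (P : Matrix V V ℝ) : Prop :=
  ∃ n : ℕ, 0 < n ∧ ∀ u v, 0 < (P ^ n) u v

/-- `pi` is a stationary distribution for `P`. -/
def IsStationaryVec [Fintype V] (P : Matrix V V ℝ) (pi : V → ℝ) : Prop :=
  (∀ v, 0 ≤ pi v) ∧ (∑ v, pi v = 1) ∧ ∀ v, ∑ u, pi u * P u v = pi v

/-- One step of the chain killed on the set `B`. -/
def killedStep [Fintype V] [DecidableEq V] (P : Matrix V V ℝ) (B : Finset V) (ν : V → ℝ) : V → ℝ :=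
  fun v => ∑ u, if u ∈ B then 0 else ν u * P u v

/-- `avoidProb P B ν t = P_ν(T_B > t)`, the probability that the chain with initial
distribution `ν` avoids `B` at all times `0,…,t`; here `T_B = inf {t ≥ 0 : X_t ∈ B}`. -/
def avoidProb [Fintype V] [DecidableEq V] (P : Matrix V V ℝ) (B : Finset V) (ν : V → ℝ) (t : ℕ) : ℝ :=
  ∑ u, if u ∈ B then 0 else ((killedStep P B)^[t] ν) u

/-- Point mass at `v`. -/
def pointMass [DecidableEq V] (v : V) : V → ℝ := fun u => if u = v then 1 else 0

/-- `E_v(T_B)`, as an extended real (infinite if `B` is not reachable). -/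
def hitExp [Fintype V] [DecidableEq V] (P : Matrix V V ℝ) (B : Finset V) (v : V) : ℝ≥0∞ :=
  ∑' t : ℕ, ENNReal.ofReal (avoidProb P B (pointMass v) t)

/-- `m_B = max_v E_v(T_B)`. -/
def maxHitExp [Fintype V] [DecidableEq V] (P : Matrix V V ℝ) (B : Finset V) : ℝ≥0∞ :=
  ⨆ v : V, hitExp P B v

/-- Transition matrix of two independent walkers. -/
def prodMatrix (P : Matrix V V ℝ) : Matrix (V × V) (V × V) ℝ :=
  fun p q => P p.1 q.1 * P p.2 q.2

/-- The diagonal of `V × V`. -/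
def diagSet (V : Type*) [Fintype V] [DecidableEq V] : Finset (V × V) :=
  univ.filter fun p => p.1 = p.2

/-- `P(m(u,v) > t)`: the probability that two independent walkers started at `u` and `v`
have not met by time `t`. -/
def meetSurvival [Fintype V] [DecidableEq V] (P : Matrix V V ℝ) (u v : V) (t : ℕ) : ℝ :=
  avoidProb (prodMatrix P) (diagSet V) (pointMass (u, v)) t

/-- `E(m(u,v))`, the expected meeting time of walkers started at `u`, `v`. -/
def meetExp [Fintype V] [DecidableEq V] (P : Matrix V V ℝ) (u v : V) : ℝ :=
  ∑' t : ℕ, meetSurvival P u v t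

/-- `m* = max_{u,v} E(m(u,v))`. -/
def maxMeetExp [Fintype V] [DecidableEq V] (P : Matrix V V ℝ) : ℝ :=
  ⨆ p : V × V, meetExp P p.1 p.2

/-- `m̄ = Σ_{u,v} pi(u) pi(v) E(m(u,v))`. -/
def meanMeetExp [Fintype V] [DecidableEq V] (P : Matrix V V ℝ) (pi : V → ℝ) : ℝ :=
  ∑ u, ∑ v, pi u * pi v * meetExp P u v

/-- Transition matrix of the coalescing random walk: the state `f : V → V` records the
current position of the walker started at each site; walkers at the same site move together. -/
def coalMatrix [Fintype V] [DecidableEq V] (P : Matrix V V ℝ) : Matrix (V → V) (V → V) ℝ :=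
  fun f g =>
    if ∀ u v, f u = f v → g u = g v then
      ∏ s ∈ univ.image f, (if h : ∃ u, f u = s then P s (g h.choose) else 0)
    else 0

/-- Constant maps: the coalescing walk has fully coalesced exactly when its state is constant. -/
def constSet (V : Type*) [Fintype V] [DecidableEq V] : Finset (V → V) :=
  univ.filter fun f => ∀ u v : V, f u = f v

/-- `P(C > t)`: the probability that the coalescing random walk started with one walker on
each state has not fully coalesced by time `t`. -/
def coalSurvival [Fintype V] [DecidableEq V] (P : Matrix V V ℝ) (t : ℕ) : ℝ :=
  avoidProb (coalMatrix P) (constSet V) (pointMass id) t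

/-- `E(C)`, the expected full coalescence time. -/
def coalExp [Fintype V] [DecidableEq V] (P : Matrix V V ℝ) : ℝ :=
  ∑' t : ℕ, coalSurvival P t

/-- `E(C²)`, via the tail-sum formula `E(C²) = Σ_{t≥0} P(C > √t)`. -/
def coalMoment2 [Fintype V] [DecidableEq V] (P : Matrix V V ℝ) : ℝ :=
  ∑' t : ℕ, coalSurvival P (Nat.sqrt t)

/-- `μ(w) = pi(w_1) ∏ P(w_j, w_{j+1})`, the stationary measure of the word `w`. -/
def wordProb [Fintype V] (pi : V → ℝ) (P : Matrix V V ℝ) {n : ℕ} (w : Fin (n + 1) → V) : ℝ :=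
  pi (w 0) * ∏ i : Fin n, P (w i.castSucc) (w i.succ)

/-- The state space `V_n` of the `n`-block chain: words of length `n+1` of positive measure. -/
abbrev BlockStates [Fintype V] (pi : V → ℝ) (P : Matrix V V ℝ) (n : ℕ) : Type _ :=
  {w : Fin (n + 1) → V // 0 < wordProb pi P w}

/-- The transition matrix `P_n` of the `n`-block chain. -/
def blockMatrix [Fintype V] [DecidableEq V] (pi : V → ℝ) (P : Matrix V V ℝ) (n : ℕ) :
    Matrix (BlockStates pi P n) (BlockStates pi P n) ℝ :=
  fun u v =>
    if ∀ i : Fin n, u.1 i.succ = v.1 i.castSucc then P (u.1 (Fin.last n)) (v.1 (Fin.last n))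
    else 0

/-- The stationary distribution `π_n` of the `n`-block chain. -/
def blockPi [Fintype V] (pi : V → ℝ) (P : Matrix V V ℝ) (n : ℕ) :
    BlockStates pi P n → ℝ :=
  fun w => wordProb pi P w.1

/-- `Δ_n = Σ_{u ∈ V_n} μ(u)²`. -/
def blockDelta [Fintype V] (pi : V → ℝ) (P : Matrix V V ℝ) (n : ℕ) : ℝ :=
  ∑ w : Fin (n + 1) → V, (wordProb pi P w) ^ 2

/-- The entropy `h(V,P) = -Σ_{u,v} pi(u) P(u,v) log P(u,v)`. -/
def chainEntropy [Fintype V] (P : Matrix V V ℝ) (pi : V → ℝ) : ℝ :=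
  -∑ u, ∑ v, pi u * P u v * Real.log (P u v)

/-!
Let `Q(u,v) = P(u,v)²` have the positive eigenvector `φ` with eigenvalue `λ`. Since
`μ(w v)² = μ(w)² Q(w_last, v)`, the `φ`-weighted sum `Σ_w μ(w)² φ(w_last)` over words of
length `n + 1` is multiplied by exactly `λ` when `n` increases by one, so it equals
`λⁿ Σ_v π(v)² φ(v)`. As `φ` is bounded above and below by positive constants, `Δ_n` is
squeezed between two constant multiples of `λⁿ`, and `log Δ_n = n log λ + O(1)`.
-/

theorem tendsto_log_div_succ_of_pow_bounds {a : ℕ → ℝ} {c₁ c₂ lam : ℝ}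
    (hc₁ : 0 < c₁) (hlam : 0 < lam) (hlow : ∀ n, c₁ * lam ^ n ≤ a n)
    (hup : ∀ n, a n ≤ c₂ * lam ^ n) :
    Tendsto (fun n : ℕ => Real.log (a n) / ((n : ℝ) + 1)) atTop (nhds (Real.log lam)) := by
  have hc₂ : 0 < c₂ := hc₁.trans_le (by simpa using (hlow 0).trans (hup 0))
  have hlog_pow_mul : ∀ {c : ℝ}, 0 < c → ∀ n : ℕ,
      Real.log (c * lam ^ n) = Real.log c + n * Real.log lam := fun hc n => by
    rw [Real.log_mul hc.ne' (pow_pos hlam n).ne', Real.log_pow]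
  have htends : ∀ c : ℝ, Tendsto (fun n : ℕ => (c + n * Real.log lam) / ((n : ℝ) + 1)) atTop
      (nhds (Real.log lam)) := fun c => by
    have h := ((tendsto_const_div_atTop_nhds_zero_nat c).comp (tendsto_add_atTop_nat 1)).add
      ((tendsto_natCast_div_add_atTop (1 : ℝ)).mul_const (Real.log lam))
    rw [zero_add, one_mul] at h
    refine h.congr fun n => ?_
    simp only [Function.comp_apply, Nat.cast_add, Nat.cast_one]
    ring
  refine tendsto_of_tendsto_of_tendsto_of_le_of_le (htends (Real.log c₁)) (htends (Real.log c₂))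
    (fun n => ?_) (fun n => ?_) <;> dsimp only <;> gcongr
  · rw [← hlog_pow_mul hc₁]
    exact Real.log_le_log (by positivity) (hlow n)
  · rw [← hlog_pow_mul hc₂]
    exact Real.log_le_log ((mul_pos hc₁ (pow_pos hlam n)).trans_le (hlow n)) (hup n)

section BlockDelta

variable [Fintype V] (pi : V → ℝ) (P : Matrix V V ℝ)

lemma wordProb_snoc {n : ℕ} (w : Fin (n + 1) → V) (v : V) :
    wordProb pi P (Fin.snoc w v : Fin (n + 2) → V) = wordProb pi P w * P (w (Fin.last n)) v := by
  simp only [wordProb, Fin.prod_univ_castSucc, Fin.succ_castSucc, Fin.succ_last,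
    Fin.snoc_castSucc, Fin.snoc_last]
  rw [← Fin.castSucc_zero, Fin.snoc_castSucc]
  ring

variable {P} {lam : ℝ} {φ : V → ℝ}

theorem sum_wordProb_sq_mul_eq_pow (heig : ∀ u, ∑ v, P u v ^ 2 * φ v = lam * φ u) (n : ℕ) :
    ∑ w : Fin (n + 1) → V, wordProb pi P w ^ 2 * φ (w (Fin.last n)) =
      lam ^ n * ∑ v, pi v ^ 2 * φ v := by
  induction n with
  | zero =>
    simp only [wordProb, Finset.univ_eq_empty, Finset.prod_empty, mul_one, pow_zero, one_mul]
    exact Fintype.sum_equiv (Equiv.funUnique (Fin 1) V) (fun w => pi (w 0) ^ 2 * φ (w 0))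
      (fun v => pi v ^ 2 * φ v) fun _ => rfl
  | succ n ih =>
    have hstep (w : Fin (n + 1) → V) :
        ∑ v, wordProb pi P (Fin.snoc w v : Fin (n + 2) → V) ^ 2 * φ v =
          lam * (wordProb pi P w ^ 2 * φ (w (Fin.last n))) := by
      simp only [wordProb_snoc, mul_pow, mul_assoc, ← Finset.mul_sum, heig]
      ring
    calc ∑ w : Fin (n + 2) → V, wordProb pi P w ^ 2 * φ (w (Fin.last (n + 1)))
        = ∑ w : Fin (n + 1) → V, ∑ v,
            wordProb pi P (Fin.snoc w v : Fin (n + 2) → V) ^ 2 * φ v := by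
          rw [Finset.sum_comm, ← Fintype.sum_prod_type']
          exact (Fintype.sum_equiv (Fin.snocEquiv fun _ => V) _ _ fun _ => by
            simp [Fin.snocEquiv]).symm
      _ = lam ^ (n + 1) * ∑ v, pi v ^ 2 * φ v := by
          simp only [hstep, ← Finset.mul_sum, ih]
          ring

theorem div_mul_pow_le_blockDelta (heig : ∀ u, ∑ v, P u v ^ 2 * φ v = lam * φ u) {M : ℝ}
    (hM : 0 < M) (hφM : ∀ v, φ v ≤ M) (n : ℕ) :
    (∑ v, pi v ^ 2 * φ v) / M * lam ^ n ≤ blockDelta pi P n := by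
  rw [div_mul_eq_mul_div, div_le_iff₀ hM, mul_comm, ← sum_wordProb_sq_mul_eq_pow pi heig,
    blockDelta, Finset.sum_mul]
  gcongr with w
  exact hφM _

theorem blockDelta_le_div_mul_pow (heig : ∀ u, ∑ v, P u v ^ 2 * φ v = lam * φ u) {m : ℝ}
    (hm : 0 < m) (hmφ : ∀ v, m ≤ φ v) (n : ℕ) :
    blockDelta pi P n ≤ (∑ v, pi v ^ 2 * φ v) / m * lam ^ n := by
  rw [div_mul_eq_mul_div, le_div_iff₀ hm, mul_comm _ (lam ^ n),
    ← sum_wordProb_sq_mul_eq_pow pi heig, blockDelta, Finset.sum_mul]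
  gcongr with w
  exact hmφ _

end BlockDelta

theorem IsStochastic.eigenvalue_sq_pos [Fintype V] [Nonempty V] {P : Matrix V V ℝ}
    (hP : IsStochastic P) {lam : ℝ} {φ : V → ℝ} (hφ : ∀ v, 0 < φ v)
    (heig : ∀ u, ∑ v, P u v ^ 2 * φ v = lam * φ u) : 0 < lam := by
  obtain ⟨u⟩ := ‹Nonempty V›
  obtain ⟨v, -, hv⟩ := Finset.exists_ne_zero_of_sum_ne_zero ((hP.2 u).trans_ne one_ne_zero)
  have hpos : 0 < lam * φ u := heig u ▸ Finset.sum_pos'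
    (fun w _ => mul_nonneg (sq_nonneg _) (hφ w).le)
    ⟨v, Finset.mem_univ v, mul_pos (sq_pos_of_ne_zero hv) (hφ v)⟩
  exact pos_of_mul_pos_left hpos (hφ u).le

theorem blockDelta_limit_general [Fintype V] (P : Matrix V V ℝ)
    (hP : IsStochastic P) (pi : V → ℝ) (hpi : IsStationaryVec P pi)
    (lam : ℝ) (φ : V → ℝ) (hφ : ∀ v, 0 < φ v)
    (heig : ∀ u, ∑ v, (P u v) ^ 2 * φ v = lam * φ u) :
    Tendsto (fun n : ℕ => Real.log (blockDelta pi P n) / ((n : ℝ) + 1)) atTop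
      (nhds (Real.log lam)) := by
  obtain ⟨u, -, hu⟩ := Finset.exists_ne_zero_of_sum_ne_zero (hpi.2.1.trans_ne one_ne_zero)
  have : Nonempty V := ⟨u⟩
  obtain ⟨vmin, hmin⟩ := Finite.exists_min φ
  obtain ⟨vmax, hmax⟩ := Finite.exists_max φ
  have hmass : 0 < ∑ v, pi v ^ 2 * φ v :=
    Finset.sum_pos' (fun v _ => mul_nonneg (sq_nonneg _) (hφ v).le)
      ⟨u, Finset.mem_univ u, mul_pos (sq_pos_of_ne_zero hu) (hφ u)⟩
  exact tendsto_log_div_succ_of_pow_bounds (div_pos hmass (hφ vmax))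
    (hP.eigenvalue_sq_pos hφ heig) (div_mul_pow_le_blockDelta pi heig (hφ vmax) hmax)
    (blockDelta_le_div_mul_pow pi heig (hφ vmin) hmin)

/-- `lim (1/n) log Δ_n = log λ` where `λ` is the Perron eigenvalue of the
matrix `Q(u,v) = P(u,v)²` (characterized by having a strictly positive eigenvector)
and `Δ_n = Σ_{u ∈ V_n} μ(u)²` (blocks of length `n+1`). -/
theorem blockDelta_limit [Fintype V] [DecidableEq V] (P : Matrix V V ℝ)
    (hP : IsStochastic P) (hmix : IsMixing P) (pi : V → ℝ) (hpi : IsStationaryVec P pi)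
    (lam : ℝ) (φ : V → ℝ) (hφ : ∀ v, 0 < φ v)
    (heig : ∀ u, ∑ v, (P u v) ^ 2 * φ v = lam * φ u) :
    Tendsto (fun n : ℕ => Real.log (blockDelta pi P n) / ((n : ℝ) + 1)) atTop
      (nhds (Real.log lam)) :=
  blockDelta_limit_general P hP pi hpi lam φ hφ heig
end
end

section
/- Let (V,P) be a mixing Markov chain. There exists K > 0 such that for all large n, the maximal expected meeting time on the n-block chain satisfies m_n* ≤ K·n/Δ_n. -/
open Finset Filter
open scoped ENNReal

noncomputable section

variable {V : Type*}

/-- `pi` is a stationary distribution for `P`. -/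
def IsStationaryDist [Fintype V] (P : Matrix V V ℝ) (pi : V → ℝ) : Prop :=
  (∀ v, 0 ≤ pi v) ∧ (∑ v, pi v = 1) ∧ ∀ v, ∑ u, pi u * P u v = pi v

/-!
Mixing gives `m` with `P ^ m` entrywise positive, so between any two letters there is a path of
length `m` whose weight is at least some `ε > 0`. Gluing such a path between a block `u` and a
block `x` shows that the `n`-block chain goes from `u` to `x` in `m + n` steps with probability at
least `ε · π_n(x)`. Hence two independent copies sit on the same block at time `m + n` with
probability at least `ε² Δ_n`, whatever their starting blocks. Applying this every `m + n` steps,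
the probability of not having met by time `k (m + n)` is at most `(1 - ε² Δ_n) ^ k`, so
`m_n* ≤ (m + n) / (ε² Δ_n) ≤ ((m + 1) / ε²) · (n + 1) / Δ_n`.
-/

theorem exists_pos_forall_le {ι : Type*} [Finite ι] {f : ι → ℝ} (hf : ∀ i, 0 < f i) :
    ∃ ε > 0, ∀ i, ε ≤ f i := by
  cases isEmpty_or_nonempty ι
  · exact ⟨1, one_pos, fun i => isEmptyElim i⟩
  · obtain ⟨i₀, hi₀⟩ := Finite.exists_min f
    exact ⟨f i₀, hf i₀, hi₀⟩

theorem tsum_le_of_le_pow_div {f : ℕ → ℝ} {M : ℝ} {L : ℕ} (hL : 0 < L) (hM0 : 0 ≤ M)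
    (hM1 : M < 1) (hf0 : ∀ t, 0 ≤ f t) (hf : ∀ t, f t ≤ M ^ (t / L)) :
    ∑' t, f t ≤ L / (1 - M) := by
  have hblock : ∀ K, ∑ t ∈ range (K * L), M ^ (t / L) = L * ∑ k ∈ range K, M ^ k := by
    intro K
    induction K with
    | zero => simp
    | succ K ih =>
      have hdiv : ∀ r ∈ range L, M ^ ((K * L + r) / L) = M ^ K := fun r hr => by
        rw [add_comm, Nat.add_mul_div_right r K hL, Nat.div_eq_of_lt (mem_range.mp hr), zero_add]
      rw [add_mul, one_mul, sum_range_add, ih, sum_congr rfl hdiv, sum_range_succ]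
      simp only [sum_const, card_range, nsmul_eq_mul]
      ring
  refine Real.tsum_le_of_sum_range_le hf0 fun T => ?_
  calc ∑ t ∈ range T, f t
      ≤ ∑ t ∈ range (T * L), M ^ (t / L) :=
        (sum_le_sum fun t _ => hf t).trans <| sum_le_sum_of_subset_of_nonneg
          (range_subset_range.mpr (Nat.le_mul_of_pos_right T hL)) fun _ _ _ => by positivity
    _ = L * ∑ k ∈ range T, M ^ k := hblock T
    _ ≤ L * (1 / (1 - M)) := by
        gcongr
        simpa using geom_sum_Ico_le_of_lt_one hM0 hM1 (m := 0) (n := T)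
    _ = L / (1 - M) := by ring

def IsSubstochastic {S : Type*} [Fintype S] (Q : Matrix S S ℝ) : Prop :=
  (∀ u v, 0 ≤ Q u v) ∧ ∀ u, ∑ v, Q u v ≤ 1

section Substochastic

variable {S : Type*} [Fintype S]

theorem IsSubstochastic.prodMatrix {Q : Matrix S S ℝ} (hQ : IsSubstochastic Q) :
    IsSubstochastic (prodMatrix Q) := by
  refine ⟨fun p q => mul_nonneg (hQ.1 _ _) (hQ.1 _ _), fun p => ?_⟩
  rw [Fintype.sum_prod_type]
  simp only [_root_.prodMatrix]
  rw [← sum_mul_sum]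
  exact mul_le_one₀ (hQ.2 _) (sum_nonneg fun v _ => hQ.1 _ _) (hQ.2 _)

variable [DecidableEq S]

theorem pow_apply_le_pow_apply_of_le {A C : Matrix S S ℝ} (hA : ∀ u v, 0 ≤ A u v)
    (hAC : ∀ u v, A u v ≤ C u v) (t : ℕ) (u v : S) : (A ^ t) u v ≤ (C ^ t) u v := by
  induction t generalizing v with
  | zero => rfl
  | succ t ih =>
    rw [pow_succ, pow_succ, Matrix.mul_apply, Matrix.mul_apply]
    exact sum_le_sum fun w _ =>
      mul_le_mul (ih w) (hAC w v) (hA w v) ((Matrix.pow_apply_nonneg hA t u w).trans (ih w))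

theorem IsSubstochastic.pow {Q : Matrix S S ℝ} (hQ : IsSubstochastic Q) (t : ℕ) :
    IsSubstochastic (Q ^ t) := by
  refine ⟨Matrix.pow_apply_nonneg hQ.1 t, fun u => ?_⟩
  induction t with
  | zero => simp [Matrix.one_apply]
  | succ t ih =>
    simp only [pow_succ, Matrix.mul_apply]
    rw [sum_comm]
    calc ∑ w, ∑ v, (Q ^ t) u w * Q w v
        ≤ ∑ w, (Q ^ t) u w := sum_le_sum fun w _ => by
          rw [← mul_sum]
          exact mul_le_of_le_one_right (Matrix.pow_apply_nonneg hQ.1 t u w) (hQ.2 w)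
      _ ≤ 1 := ih

theorem prod_le_pow_apply {Q : Matrix S S ℝ} (hQ : ∀ u v, 0 ≤ Q u v) (z : ℕ → S) (k : ℕ) :
    ∏ j ∈ range k, Q (z j) (z (j + 1)) ≤ (Q ^ k) (z 0) (z k) := by
  induction k with
  | zero => simp
  | succ k ih =>
    rw [prod_range_succ, pow_succ, Matrix.mul_apply]
    calc (∏ j ∈ range k, Q (z j) (z (j + 1))) * Q (z k) (z (k + 1))
        ≤ (Q ^ k) (z 0) (z k) * Q (z k) (z (k + 1)) := by gcongr; exact hQ _ _
      _ ≤ ∑ w, (Q ^ k) (z 0) w * Q w (z (k + 1)) :=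
          single_le_sum (f := fun w => (Q ^ k) (z 0) w * Q w (z (k + 1)))
            (fun w _ => mul_nonneg (Matrix.pow_apply_nonneg hQ k _ w) (hQ w _)) (mem_univ _)

theorem exists_path_of_pow_apply_pos {Q : Matrix S S ℝ} (hQ : ∀ u v, 0 ≤ Q u v) {m : ℕ}
    {a b : S} (hab : 0 < (Q ^ m) a b) :
    ∃ z : ℕ → S, z 0 = a ∧ z m = b ∧ ∀ j < m, 0 < Q (z j) (z (j + 1)) := by
  induction m generalizing b with
  | zero =>
    have hab : a = b := by by_contra h; simp [h] at hab
    exact ⟨fun _ => a, rfl, hab, by simp⟩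
  | succ m ih =>
    rw [pow_succ, Matrix.mul_apply] at hab
    obtain ⟨w, -, hw⟩ := exists_lt_of_sum_lt (f := fun _ => (0 : ℝ)) (by simpa using hab)
    have hw₁ : 0 < (Q ^ m) a w := pos_of_mul_pos_left hw (hQ w b)
    have hw₂ : 0 < Q w b := pos_of_mul_pos_right hw (Matrix.pow_apply_nonneg hQ m a w)
    obtain ⟨z, hz0, hzm, hz⟩ := ih hw₁
    refine ⟨fun j => if j ≤ m then z j else b, by simpa using hz0, by simp, fun j hj => ?_⟩
    rcases Nat.lt_or_ge j m with hjm | hjm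
    · simpa [hjm.le, Nat.succ_le_of_lt hjm] using hz j hjm
    · obtain rfl : j = m := by omega
      simpa [hzm] using hw₂

theorem prodMatrix_pow_apply (Q : Matrix S S ℝ) (t : ℕ) (p q : S × S) :
    (prodMatrix Q ^ t) p q = (Q ^ t) p.1 q.1 * (Q ^ t) p.2 q.2 := by
  induction t generalizing q with
  | zero =>
    obtain ⟨p₁, p₂⟩ := p
    obtain ⟨q₁, q₂⟩ := q
    by_cases h₁ : p₁ = q₁ <;> by_cases h₂ : p₂ = q₂ <;> simp [h₁, h₂]
  | succ t ih =>
    simp only [pow_succ, Matrix.mul_apply, Fintype.sum_prod_type, ih, sum_mul_sum]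
    exact sum_congr rfl fun _ _ => sum_congr rfl fun _ _ => by simp only [prodMatrix]; ring

theorem sum_diagSet_prodMatrix_pow_apply (Q : Matrix S S ℝ) (t : ℕ) (p : S × S) :
    ∑ b ∈ diagSet S, (prodMatrix Q ^ t) p b = ∑ x, (Q ^ t) p.1 x * (Q ^ t) p.2 x := by
  simp [diagSet, sum_filter, Fintype.sum_prod_type, prodMatrix_pow_apply]

end Substochastic

section KilledChain

open Matrix

variable {S : Type*} [DecidableEq S] (Q : Matrix S S ℝ) (B : Finset S)

def killedMatrix : Matrix S S ℝ := fun u v => if u ∈ B then 0 else Q u v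

variable {Q} in
theorem killedMatrix_nonneg (hQ : ∀ u v, 0 ≤ Q u v) (u v : S) : 0 ≤ killedMatrix Q B u v := by
  unfold killedMatrix; split_ifs <;> simp [hQ u v]

variable {Q} in
theorem killedMatrix_le (hQ : ∀ u v, 0 ≤ Q u v) (u v : S) : killedMatrix Q B u v ≤ Q u v := by
  unfold killedMatrix; split_ifs <;> simp [hQ u v]

variable [Fintype S]

theorem killedStep_iterate_pointMass (p : S) (t : ℕ) :
    (killedStep Q B)^[t] (pointMass p) = fun v => (killedMatrix Q B ^ t) p v := by
  induction t with
  | zero => ext v; simp [pointMass, Matrix.one_apply, eq_comm]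
  | succ t ih =>
    ext v
    rw [Function.iterate_succ_apply', ih, pow_succ, Matrix.mul_apply]
    exact sum_congr rfl fun u _ => by simp only [killedMatrix, mul_ite, mul_zero]

theorem avoidProb_pointMass_eq_mulVec (p : S) (t : ℕ) :
    avoidProb Q B (pointMass p) t
      = (killedMatrix Q B ^ t *ᵥ fun u => if u ∈ B then 0 else 1) p := by
  simp only [avoidProb, killedStep_iterate_pointMass, mulVec, dotProduct, mul_ite, mul_zero,
    mul_one]

theorem avoidProb_pointMass_zero (p : S) :
    avoidProb Q B (pointMass p) 0 = if p ∈ B then 0 else 1 := by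
  simp [avoidProb_pointMass_eq_mulVec]

theorem avoidProb_pointMass_add (p : S) (s t : ℕ) :
    avoidProb Q B (pointMass p) (s + t)
      = ∑ q, (killedMatrix Q B ^ s) p q * avoidProb Q B (pointMass q) t := by
  simp only [avoidProb_pointMass_eq_mulVec, pow_add, ← mulVec_mulVec]
  rfl

theorem avoidProb_pointMass_of_mem {q : S} (hq : q ∈ B) (t : ℕ) :
    avoidProb Q B (pointMass q) t = 0 := by
  cases t with
  | zero => simp [avoidProb_pointMass_zero, hq]
  | succ t =>
    rw [add_comm, avoidProb_pointMass_add]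
    exact sum_eq_zero fun v _ => by simp [killedMatrix, hq]

variable {Q}

theorem avoidProb_pointMass_nonneg (hQ : ∀ u v, 0 ≤ Q u v) (p : S) (t : ℕ) :
    0 ≤ avoidProb Q B (pointMass p) t := by
  rw [avoidProb_pointMass_eq_mulVec]
  refine sum_nonneg fun u _ => mul_nonneg ?_ (by dsimp only; split_ifs <;> norm_num)
  exact Matrix.pow_apply_nonneg (killedMatrix_nonneg B hQ) t p u

theorem avoidProb_pointMass_le_one_sub (hQ : IsSubstochastic Q) (p : S) (t : ℕ) :
    avoidProb Q B (pointMass p) t ≤ 1 - ∑ b ∈ B, (Q ^ t) p b := by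
  have hsplit : ∑ u, (Q ^ t) p u * (if u ∈ B then 0 else 1)
      = ∑ u, (Q ^ t) p u - ∑ b ∈ B, (Q ^ t) p b := by
    have hB := sum_ite_mem univ B fun u => (Q ^ t) p u
    rw [univ_inter] at hB
    rw [eq_sub_iff_add_eq, ← hB, ← sum_add_distrib]
    exact sum_congr rfl fun u _ => by split_ifs <;> ring
  rw [avoidProb_pointMass_eq_mulVec]
  calc ∑ u, (killedMatrix Q B ^ t) p u * (if u ∈ B then 0 else 1)
      ≤ ∑ u, (Q ^ t) p u * (if u ∈ B then 0 else 1) :=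
        sum_le_sum fun u _ => by
          gcongr
          exact pow_apply_le_pow_apply_of_le (killedMatrix_nonneg B hQ.1)
            (killedMatrix_le B hQ.1) t p u
    _ ≤ 1 - ∑ b ∈ B, (Q ^ t) p b := by rw [hsplit]; linarith [(hQ.pow t).2 p]

theorem avoidProb_pointMass_le_initial (hQ : IsSubstochastic Q) (q : S) (t : ℕ) :
    avoidProb Q B (pointMass q) t ≤ avoidProb Q B (pointMass q) 0 := by
  rw [avoidProb_pointMass_zero]
  split_ifs with hq
  · exact (avoidProb_pointMass_of_mem Q B hq t).le
  · linarith [avoidProb_pointMass_le_one_sub B hQ q t,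
      sum_nonneg fun b (_ : b ∈ B) => (hQ.pow t).1 q b]

theorem avoidProb_pointMass_add_le_mul (hQ : ∀ u v, 0 ≤ Q u v) {M : ℝ} {L : ℕ}
    (hM : ∀ q, avoidProb Q B (pointMass q) L ≤ M * avoidProb Q B (pointMass q) 0) (p : S)
    (s : ℕ) : avoidProb Q B (pointMass p) (s + L) ≤ M * avoidProb Q B (pointMass p) s := by
  calc avoidProb Q B (pointMass p) (s + L)
      = ∑ q, (killedMatrix Q B ^ s) p q * avoidProb Q B (pointMass q) L :=
        avoidProb_pointMass_add Q B p s L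
    _ ≤ ∑ q, (killedMatrix Q B ^ s) p q * (M * avoidProb Q B (pointMass q) 0) :=
        sum_le_sum fun q _ =>
          mul_le_mul_of_nonneg_left (hM q)
            (Matrix.pow_apply_nonneg (killedMatrix_nonneg B hQ) s p q)
    _ = M * avoidProb Q B (pointMass p) s := by
        rw [← add_zero s, avoidProb_pointMass_add, mul_sum, add_zero]
        exact sum_congr rfl fun q _ => by ring

theorem avoidProb_pointMass_antitone (hQ : IsSubstochastic Q) (p : S) :
    Antitone (avoidProb Q B (pointMass p)) := by
  intro s t hst
  obtain ⟨r, rfl⟩ := Nat.exists_eq_add_of_le hst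
  simpa using avoidProb_pointMass_add_le_mul B hQ.1 (M := 1) (L := r)
    (fun q => by simpa using avoidProb_pointMass_le_initial B hQ q r) p s

theorem avoidProb_pointMass_mul_le_pow (hQ : IsSubstochastic Q) {M : ℝ} (hM0 : 0 ≤ M) {L : ℕ}
    (hM : ∀ q, avoidProb Q B (pointMass q) L ≤ M) (p : S) (k : ℕ) :
    avoidProb Q B (pointMass p) (k * L) ≤ M ^ k := by
  have hML : ∀ q, avoidProb Q B (pointMass q) L ≤ M * avoidProb Q B (pointMass q) 0 := by
    intro q
    by_cases hq : q ∈ B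
    · simp [avoidProb_pointMass_of_mem Q B hq]
    · simpa [avoidProb_pointMass_zero, hq] using hM q
  induction k with
  | zero => rw [zero_mul, pow_zero, avoidProb_pointMass_zero]; split_ifs <;> norm_num
  | succ k ih =>
    rw [add_mul, one_mul, pow_succ']
    exact (avoidProb_pointMass_add_le_mul B hQ.1 hML p _).trans (mul_le_mul_of_nonneg_left ih hM0)

theorem tsum_avoidProb_pointMass_le (hQ : IsSubstochastic Q) {L : ℕ} (hL : 0 < L) {δ : ℝ}
    (hδ : 0 < δ) (hhit : ∀ q, δ ≤ ∑ b ∈ B, (Q ^ L) q b) (p : S) :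
    ∑' t, avoidProb Q B (pointMass p) t ≤ L / δ := by
  have hδ1 : δ ≤ 1 := (hhit p).trans <| (sum_le_sum_of_subset_of_nonneg (subset_univ B)
    fun b _ _ => (hQ.pow L).1 p b).trans ((hQ.pow L).2 p)
  have hM : ∀ q, avoidProb Q B (pointMass q) L ≤ 1 - δ := fun q =>
    (avoidProb_pointMass_le_one_sub B hQ q L).trans (by linarith [hhit q])
  simpa using tsum_le_of_le_pow_div hL (sub_nonneg.mpr hδ1) (by linarith)
    (avoidProb_pointMass_nonneg B hQ.1 p) fun t =>
      (avoidProb_pointMass_antitone B hQ p (Nat.div_mul_le_self t L)).trans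
        (avoidProb_pointMass_mul_le_pow B hQ (sub_nonneg.mpr hδ1) hM p (t / L))

end KilledChain

theorem meetExp_le_of_minorization {T : Type*} [Fintype T] [DecidableEq T] {R : Matrix T T ℝ}
    (hR : IsSubstochastic R) {L : ℕ} (hL : 0 < L) {ε : ℝ} (hε : 0 < ε) {μ : T → ℝ}
    (hμ : ∀ x, 0 ≤ μ x) (hμpos : 0 < ∑ x, μ x ^ 2) (hlow : ∀ u x, ε * μ x ≤ (R ^ L) u x)
    (u v : T) : meetExp R u v ≤ L / (ε ^ 2 * ∑ x, μ x ^ 2) := by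
  refine tsum_avoidProb_pointMass_le (diagSet T) hR.prodMatrix hL (by positivity)
    (fun q => ?_) (u, v)
  rw [sum_diagSet_prodMatrix_pow_apply, mul_sum]
  refine sum_le_sum fun x _ => ?_
  rw [show ε ^ 2 * μ x ^ 2 = (ε * μ x) * (ε * μ x) by ring]
  exact mul_le_mul (hlow _ _) (hlow _ _) (mul_nonneg hε.le (hμ x))
    (Matrix.pow_apply_nonneg hR.1 L _ _)

section BlockChain

def window (c : ℕ → V) (n j : ℕ) : Fin (n + 1) → V := fun i => c (j + i)

variable [Fintype V] {P : Matrix V V ℝ} {pi : V → ℝ}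

theorem pi_mul_le (hP : IsStochastic P) (hpi : IsStationaryDist P pi) (u v : V) :
    pi u * P u v ≤ pi v := by
  rw [← hpi.2.2 v]
  exact single_le_sum (f := fun w => pi w * P w v)
    (fun w _ => mul_nonneg (hpi.1 w) (hP.1 w v)) (mem_univ u)

theorem pi_le_one (hpi : IsStationaryDist P pi) (v : V) : pi v ≤ 1 := by
  rw [← hpi.2.1]
  exact single_le_sum (fun w _ => hpi.1 w) (mem_univ v)

theorem wordProb_nonneg (hP : IsStochastic P) (hpi : IsStationaryDist P pi) {n : ℕ}
    (w : Fin (n + 1) → V) : 0 ≤ wordProb pi P w :=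
  mul_nonneg (hpi.1 _) (prod_nonneg fun _ _ => hP.1 _ _)

theorem wordProb_window (c : ℕ → V) (n j : ℕ) :
    wordProb pi P (window c n j) = pi (c j) * ∏ i ∈ range n, P (c (j + i)) (c (j + i + 1)) := by
  rw [wordProb, ← Fin.prod_univ_eq_prod_range (fun i => P (c (j + i)) (c (j + i + 1)))]
  simp [window, add_assoc]

theorem wordProb_window_pos_iff (hP : IsStochastic P) (hpi : IsStationaryDist P pi)
    (c : ℕ → V) (n j : ℕ) :
    0 < wordProb pi P (window c n j) ↔
      0 < pi (c j) ∧ ∀ i < n, 0 < P (c (j + i)) (c (j + i + 1)) := by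
  rw [wordProb_window]
  constructor
  · intro h
    have hprod := pos_of_mul_pos_right h (hpi.1 _)
    refine ⟨pos_of_mul_pos_left h (prod_nonneg fun i _ => hP.1 _ _), fun i hi => ?_⟩
    exact (hP.1 _ _).lt_of_ne fun h0 => hprod.ne' (prod_eq_zero (mem_range.2 hi) h0.symm)
  · rintro ⟨h0, h⟩
    exact mul_pos h0 (prod_pos fun i hi => h i (mem_range.1 hi))

theorem pi_pos_of_transition_pos (hP : IsStochastic P) (hpi : IsStationaryDist P pi)
    {c : ℕ → V} {N : ℕ} (h0 : 0 < pi (c 0)) (hc : ∀ j < N, 0 < P (c j) (c (j + 1))) :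
    ∀ j ≤ N, 0 < pi (c j) := by
  intro j hj
  induction j with
  | zero => exact h0
  | succ j ih =>
    exact (mul_pos (ih (by omega)) (hc j (by omega))).trans_le (pi_mul_le hP hpi _ _)

theorem sum_blockPi_sq (hP : IsStochastic P) (hpi : IsStationaryDist P pi) (n : ℕ) :
    ∑ x : BlockStates pi P n, blockPi pi P n x ^ 2 = blockDelta pi P n := by
  rw [blockDelta, ← sum_filter_of_ne (p := fun w => 0 < wordProb pi P w) fun w _ hw =>
    (wordProb_nonneg hP hpi w).lt_of_ne fun h => hw (by rw [← h]; ring)]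
  exact (sum_subtype _ (fun w => by simp) fun w => wordProb pi P w ^ 2).symm

variable [DecidableEq V]

theorem isSubstochastic_blockMatrix (hP : IsStochastic P) (n : ℕ) :
    IsSubstochastic (blockMatrix pi P n) := by
  refine ⟨fun u v => ?_, fun y => ?_⟩
  · unfold blockMatrix; split_ifs <;> simp [hP.1]
  set succs := univ.filter fun x : BlockStates pi P n => ∀ i : Fin n, y.1 i.succ = x.1 i.castSucc
  have hinj : Set.InjOn (fun x : BlockStates pi P n => x.1 (Fin.last n)) succs := by
    intro x hx x' hx' hlast
    refine Subtype.ext (funext fun i => Fin.lastCases hlast (fun i => ?_) i)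
    rw [← (mem_filter.1 (mem_coe.1 hx)).2 i, (mem_filter.1 (mem_coe.1 hx')).2 i]
  calc ∑ x, blockMatrix pi P n y x
      = ∑ x ∈ succs, P (y.1 (Fin.last n)) (x.1 (Fin.last n)) := by
        rw [sum_filter]; rfl
    _ = ∑ a ∈ succs.image fun x => x.1 (Fin.last n), P (y.1 (Fin.last n)) a :=
        (sum_image hinj).symm
    _ ≤ ∑ a, P (y.1 (Fin.last n)) a :=
        sum_le_sum_of_subset_of_nonneg (subset_univ _) fun a _ _ => hP.1 _ _
    _ = 1 := hP.2 _

theorem blockMatrix_window_succ (c : ℕ → V) (n j : ℕ) (h : 0 < wordProb pi P (window c n j))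
    (h' : 0 < wordProb pi P (window c n (j + 1))) :
    blockMatrix pi P n ⟨window c n j, h⟩ ⟨window c n (j + 1), h'⟩
      = P (c (n + j)) (c (n + j + 1)) := by
  rw [blockMatrix, if_pos fun i => by simp only [window, Fin.val_succ, Fin.val_castSucc]; ring_nf]
  simp only [window, Fin.val_last]
  ring_nf

theorem prod_le_blockMatrix_pow_of_window (hP : IsStochastic P) (hpi : IsStationaryDist P pi)
    {c : ℕ → V} {n k : ℕ} (u x : BlockStates pi P n) (hu : window c n 0 = u.1)
    (hx : window c n k = x.1) (hc : ∀ j < k + n, 0 < P (c j) (c (j + 1))) :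
    ∏ j ∈ range k, P (c (n + j)) (c (n + j + 1)) ≤ (blockMatrix pi P n ^ k) u x := by
  have hc0 : 0 < pi (c 0) := ((wordProb_window_pos_iff hP hpi c n 0).1 (hu ▸ u.2)).1
  have hpos : ∀ j ≤ k, 0 < wordProb pi P (window c n j) := fun j hj =>
    (wordProb_window_pos_iff hP hpi c n j).2
      ⟨pi_pos_of_transition_pos hP hpi hc0 hc j (by omega), fun i hi => hc _ (by omega)⟩
  let z : ℕ → BlockStates pi P n := fun j => if h : j ≤ k then ⟨window c n j, hpos j h⟩ else u
  have hz0 : z 0 = u := by simp only [z, dif_pos (Nat.zero_le k)]; exact Subtype.ext hu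
  have hzk : z k = x := by simp only [z, dif_pos le_rfl]; exact Subtype.ext hx
  calc ∏ j ∈ range k, P (c (n + j)) (c (n + j + 1))
      = ∏ j ∈ range k, blockMatrix pi P n (z j) (z (j + 1)) :=
        prod_congr rfl fun j hj => by
          have hj : j < k := mem_range.1 hj
          simp only [z, dif_pos hj.le, dif_pos (Nat.succ_le_of_lt hj), blockMatrix_window_succ]
    _ ≤ (blockMatrix pi P n ^ k) (z 0) (z k) :=
        prod_le_pow_apply (isSubstochastic_blockMatrix hP n).1 z k
    _ = (blockMatrix pi P n ^ k) u x := by rw [hz0, hzk]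

theorem mul_blockPi_le_blockMatrix_pow (hP : IsStochastic P) (hpi : IsStationaryDist P pi)
    {m n : ℕ} (u x : BlockStates pi P n) {z : ℕ → V} (hz0 : z 0 = u.1 (Fin.last n))
    (hzm : z m = x.1 0) (hz : ∀ j < m, 0 < P (z j) (z (j + 1))) :
    (∏ j ∈ range m, P (z j) (z (j + 1))) * blockPi pi P n x
      ≤ (blockMatrix pi P n ^ (m + n)) u x := by
  -- `c` reads `u`, then `z`, then `x`, glued along `z 0 = u_n` and `z m = x_0`; its windows at
  -- `0, 1, …, m + n` are consecutive states of the block chain from `u` to `x`.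
  let c : ℕ → V := fun j =>
    if j ≤ n then u.1 (Fin.clamp j n)
    else if j ≤ n + m then z (j - n) else x.1 (Fin.clamp (j - (n + m)) n)
  have hclamp : ∀ i : Fin (n + 1), Fin.clamp i n = i := fun i => Fin.ext (by simp [i.is_le])
  have hcz : ∀ j ≤ m, c (n + j) = z j := by
    intro j hj
    rcases j.eq_zero_or_pos with rfl | hj0
    · have hlast := hclamp (Fin.last n)
      rw [Fin.val_last] at hlast
      simp [c, hz0, hlast]
    · simp [c, show ¬ n + j ≤ n by omega, show n + j ≤ n + m by omega]
  have hcx : ∀ i : Fin (n + 1), c (n + m + i) = x.1 i := by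
    intro i
    by_cases hi0 : (i : ℕ) = 0
    · obtain rfl : i = 0 := Fin.ext hi0
      simpa [hzm] using hcz m le_rfl
    · simp [c, show ¬ n + m + i ≤ n by omega, show ¬ n + m + i ≤ n + m by omega, hclamp]
  have hu : window c n 0 = u.1 := funext fun i => by simp [window, c, i.is_le, hclamp]
  have hx : window c n (n + m) = x.1 := funext fun i => by simp [window, hcx i]
  have hc : ∀ j < m + n + n, 0 < P (c j) (c (j + 1)) := by
    intro j hj
    have hu' := ((wordProb_window_pos_iff hP hpi c n 0).1 (hu ▸ u.2)).2
    have hx' := ((wordProb_window_pos_iff hP hpi c n (n + m)).1 (hx ▸ x.2)).2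
    rcases lt_or_ge j n with h1 | h1
    · simpa using hu' j h1
    rcases lt_or_ge j (n + m) with h2 | h2
    · obtain ⟨i, rfl⟩ := Nat.exists_eq_add_of_le h1
      rw [add_assoc, hcz i (by omega), hcz (i + 1) (by omega)]
      exact hz i (by omega)
    · obtain ⟨i, rfl⟩ := Nat.exists_eq_add_of_le h2
      exact hx' i (by omega)
  have hxprod : blockPi pi P n x ≤ ∏ i ∈ range n, P (c (n + m + i)) (c (n + m + i + 1)) := by
    rw [blockPi, ← hx, wordProb_window]
    exact mul_le_of_le_one_left (prod_nonneg fun _ _ => hP.1 _ _) (pi_le_one hpi _)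
  calc (∏ j ∈ range m, P (z j) (z (j + 1))) * blockPi pi P n x
      ≤ (∏ j ∈ range m, P (z j) (z (j + 1)))
          * ∏ i ∈ range n, P (c (n + m + i)) (c (n + m + i + 1)) :=
        mul_le_mul_of_nonneg_left hxprod (prod_nonneg fun _ _ => hP.1 _ _)
    _ = ∏ j ∈ range (m + n), P (c (n + j)) (c (n + j + 1)) := by
        rw [prod_range_add]
        congr 1
        · exact prod_congr rfl fun j hj => by
            rw [hcz j (mem_range.1 hj).le]
            exact congrArg (P (z j)) (hcz (j + 1) (mem_range.1 hj)).symm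
        · simp only [add_assoc]
    _ ≤ (blockMatrix pi P n ^ (m + n)) u x :=
        prod_le_blockMatrix_pow_of_window hP hpi u x hu (by rw [Nat.add_comm m n]; exact hx) hc

theorem exists_pos_mul_blockPi_le_blockMatrix_pow (hP : IsStochastic P)
    (hpi : IsStationaryDist P pi) {m : ℕ} (hm : ∀ a b, 0 < (P ^ m) a b) :
    ∃ ε > 0, ∀ (n : ℕ) (u x : BlockStates pi P n),
      ε * blockPi pi P n x ≤ (blockMatrix pi P n ^ (m + n)) u x := by
  choose z hz0 hzm hz using fun a b => exists_path_of_pow_apply_pos hP.1 (hm a b)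
  obtain ⟨ε, hε, hεle⟩ := exists_pos_forall_le (f := fun ab : V × V =>
    ∏ j ∈ range m, P (z ab.1 ab.2 j) (z ab.1 ab.2 (j + 1)))
    fun ab => prod_pos fun j hj => hz ab.1 ab.2 j (mem_range.1 hj)
  refine ⟨ε, hε, fun n u x => ?_⟩
  calc ε * blockPi pi P n x
      ≤ (∏ j ∈ range m, P (z (u.1 (Fin.last n)) (x.1 0) j) (z (u.1 (Fin.last n)) (x.1 0) (j + 1)))
          * blockPi pi P n x :=
        mul_le_mul_of_nonneg_right (hεle (u.1 (Fin.last n), x.1 0)) (wordProb_nonneg hP hpi x.1)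
    _ ≤ (blockMatrix pi P n ^ (m + n)) u x :=
        mul_blockPi_le_blockMatrix_pow hP hpi u x (hz0 _ _) (hzm _ _) (hz _ _)

end BlockChain

/-- there is `K > 0` such that for all large `n`, the maximal expected meeting
time on the `n`-block chain satisfies `m_n* ≤ K·(n+1)/Δ_n`. -/
theorem max_meeting_upper_bound [Fintype V] [DecidableEq V] (P : Matrix V V ℝ)
    (hP : IsStochastic P) (hmix : IsMixing P) (pi : V → ℝ) (hpi : IsStationaryDist P pi) :
    ∃ K > (0 : ℝ), ∃ N : ℕ, ∀ n ≥ N,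
      maxMeetExp (blockMatrix pi P n) ≤ K * ((n : ℝ) + 1) / blockDelta pi P n := by
  obtain ⟨m, hm, hmpos⟩ := hmix
  obtain ⟨ε, hε, hlow⟩ := exists_pos_mul_blockPi_le_blockMatrix_pow hP hpi hmpos
  refine ⟨(m + 1) / ε ^ 2, by positivity, 0, fun n _ => ?_⟩
  have hΔ : 0 ≤ blockDelta pi P n := sum_nonneg fun w _ => sq_nonneg _
  refine Real.iSup_le (fun p => ?_) (by positivity)
  have hΔpos : 0 < blockDelta pi P n := by
    rw [← sum_blockPi_sq hP hpi]
    exact sum_pos (fun x _ => pow_pos x.2 2) ⟨p.1, mem_univ _⟩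
  calc meetExp (blockMatrix pi P n) p.1 p.2
      ≤ ((m + n : ℕ) : ℝ) / (ε ^ 2 * blockDelta pi P n) := by
        rw [← sum_blockPi_sq hP hpi] at hΔpos ⊢
        exact meetExp_le_of_minorization (isSubstochastic_blockMatrix hP n) (by omega) hε
          (fun x => x.2.le) hΔpos (hlow n) p.1 p.2
    _ ≤ (m + 1) * (n + 1) / (ε ^ 2 * blockDelta pi P n) := by
        gcongr
        push_cast
        nlinarith
    _ = (m + 1) / ε ^ 2 * (n + 1) / blockDelta pi P n := by
        field_simp
end
end

section
/- Let (V,P) be a mixing Markov chain with entropy h(V,P) = −Σ_{u,v} π(u)·P(u,v)·log P(u,v) and L(V,P) = −log λ, λ the Perron eigenvalue of Q(u,v) = P(u,v)². Then 0 ≤ L(V,P) ≤ h(V,P). -/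
open Finset Filter
open scoped ENNReal

noncomputable section

variable {V : Type*}

/-- `pi` is a stationary distribution for `P`. -/
def IsStationaryChain [Fintype V] (P : Matrix V V ℝ) (pi : V → ℝ) : Prop :=
  (∀ v, 0 ≤ pi v) ∧ (∑ v, pi v = 1) ∧ ∀ v, ∑ u, pi u * P u v = pi v

/-! Since `P` is stochastic, its entrywise square `Q` is a nonnegative matrix with row
sums at most one; evaluating `Q φ = λ φ` at a maximum of `φ > 0` gives `0 < λ ≤ 1`. For the
upper bound, concavity of `log` in the `u`-th row, with weights `P(u, ·)`, gives
`Σ_v P(u,v) log (P(u,v) φ(v)) ≤ log (λ φ(u))`; averaging over `u` against `π`, stationarity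
makes the `log φ` terms cancel, leaving `-h(V,P) ≤ log λ`. -/

namespace Real

theorem sum_mul_log_le_log_sum_mul {ι : Type*} [Fintype ι] (w y : ι → ℝ)
    (hw : ∀ i, 0 ≤ w i) (hw₁ : ∑ i, w i = 1) (hy : ∀ i, w i ≠ 0 → 0 < y i) :
    ∑ i, w i * log (y i) ≤ log (∑ i, w i * y i) := by
  have hsupp : ∀ f : ι → ℝ, ∑ i with w i ≠ 0, w i * f i = ∑ i, w i * f i := fun f =>
    sum_filter_of_ne fun i _ h hw => h (by rw [hw, zero_mul])
  have hjensen := strictConcaveOn_log_Ioi.concaveOn.le_map_sum (t := univ.filter (w · ≠ 0))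
    (fun i _ => hw i) (by rw [sum_filter_ne_zero, hw₁])
    (fun i hi => Set.mem_Ioi.mpr (hy i (mem_filter.mp hi).2))
  simpa only [smul_eq_mul, hsupp] using hjensen

end Real

section Chain

variable [Fintype V]

theorem IsStochastic.le_one {P : Matrix V V ℝ} (hP : IsStochastic P) (u v : V) : P u v ≤ 1 :=
  (single_le_sum (fun w _ => hP.1 u w) (mem_univ v)).trans_eq (hP.2 u)

theorem IsStochastic.exists_pos {P : Matrix V V ℝ} (hP : IsStochastic P) (u : V) :
    ∃ v, 0 < P u v := by
  obtain ⟨v, -, hv⟩ := exists_ne_zero_of_sum_ne_zero (hP.2 u ▸ one_ne_zero)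
  exact ⟨v, (hP.1 u v).lt_of_ne' hv⟩

theorem IsStationaryChain.nonempty {P : Matrix V V ℝ} {pi : V → ℝ}
    (hpi : IsStationaryChain P pi) : Nonempty V := by
  obtain ⟨v, -, -⟩ := exists_ne_zero_of_sum_ne_zero (hpi.2.1 ▸ one_ne_zero)
  exact ⟨v⟩

theorem IsStationaryChain.sum_mul_sum_mul {P : Matrix V V ℝ} {pi : V → ℝ}
    (hpi : IsStationaryChain P pi) (f : V → ℝ) :
    ∑ u, pi u * ∑ v, P u v * f v = ∑ v, pi v * f v := by
  simp only [mul_sum, ← mul_assoc]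
  rw [sum_comm]
  exact sum_congr rfl fun v _ => by rw [← sum_mul, hpi.2.2 v]

section Eigenvalue

variable {Q : Matrix V V ℝ} {φ : V → ℝ} {lam : ℝ}

theorem eigenvalue_pos_of_pos_eigenvector (hQ : ∀ u v, 0 ≤ Q u v) (hφ : ∀ v, 0 < φ v)
    (heig : ∀ u, ∑ v, Q u v * φ v = lam * φ u) {u v : V} (huv : 0 < Q u v) : 0 < lam := by
  have hsum : 0 < ∑ w, Q u w * φ w :=
    sum_pos' (fun w _ => mul_nonneg (hQ u w) (hφ w).le) ⟨v, mem_univ v, mul_pos huv (hφ v)⟩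
  rw [heig u] at hsum
  exact pos_of_mul_pos_left hsum (hφ u).le

theorem eigenvalue_le_one_of_rowSum_le_one [Nonempty V] (hQ : ∀ u v, 0 ≤ Q u v)
    (hrow : ∀ u, ∑ v, Q u v ≤ 1) (hφ : ∀ v, 0 < φ v)
    (heig : ∀ u, ∑ v, Q u v * φ v = lam * φ u) : lam ≤ 1 := by
  obtain ⟨u, -, hu⟩ := exists_max_image univ φ univ_nonempty
  refine le_of_mul_le_mul_right ?_ (hφ u)
  calc lam * φ u = ∑ v, Q u v * φ v := (heig u).symm
    _ ≤ ∑ v, Q u v * φ u :=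
        sum_le_sum fun v _ => mul_le_mul_of_nonneg_left (hu v (mem_univ v)) (hQ u v)
    _ = (∑ v, Q u v) * φ u := (sum_mul ..).symm
    _ ≤ 1 * φ u := mul_le_mul_of_nonneg_right (hrow u) (hφ u).le

end Eigenvalue

section SquaredChain

variable {P : Matrix V V ℝ} {φ : V → ℝ} {lam : ℝ}

theorem IsStochastic.sum_sq_le_one (hP : IsStochastic P) (u : V) : ∑ v, P u v ^ 2 ≤ 1 :=
  (sum_le_sum fun v _ => pow_le_of_le_one (hP.1 u v) (hP.le_one u v) two_ne_zero).trans_eq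
    (hP.2 u)

theorem IsStochastic.sum_mul_log_add_sum_mul_log_le (hP : IsStochastic P) (hφ : ∀ v, 0 < φ v)
    (hlam : 0 < lam) (heig : ∀ u, ∑ v, P u v ^ 2 * φ v = lam * φ u) (u : V) :
    ∑ v, P u v * Real.log (P u v) + ∑ v, P u v * Real.log (φ v) ≤
      Real.log lam + Real.log (φ u) := by
  have hsplit : ∀ v, P u v * Real.log (P u v * φ v) =
      P u v * Real.log (P u v) + P u v * Real.log (φ v) := fun v => by
    rcases eq_or_ne (P u v) 0 with h | h
    · simp [h]
    · rw [Real.log_mul h (hφ v).ne', mul_add]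
  have hjensen := Real.sum_mul_log_le_log_sum_mul (P u) (fun v => P u v * φ v) (hP.1 u) (hP.2 u)
    fun v hv => mul_pos ((hP.1 u v).lt_of_ne' hv) (hφ v)
  simp only [hsplit, ← mul_assoc, ← sq] at hjensen
  rwa [heig u, Real.log_mul hlam.ne' (hφ u).ne', sum_add_distrib] at hjensen

theorem IsStochastic.neg_log_le_chainEntropy (hP : IsStochastic P) {pi : V → ℝ}
    (hpi : IsStationaryChain P pi) (hφ : ∀ v, 0 < φ v) (hlam : 0 < lam)
    (heig : ∀ u, ∑ v, P u v ^ 2 * φ v = lam * φ u) : -Real.log lam ≤ chainEntropy P pi := by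
  have hrow := hP.sum_mul_log_add_sum_mul_log_le hφ hlam heig
  have hmean : ∑ u, pi u * (∑ v, P u v * Real.log (P u v) + ∑ v, P u v * Real.log (φ v)) ≤
      ∑ u, pi u * (Real.log lam + Real.log (φ u)) :=
    sum_le_sum fun u _ => mul_le_mul_of_nonneg_left (hrow u) (hpi.1 u)
  simp only [mul_add, sum_add_distrib, hpi.sum_mul_sum_mul, ← sum_mul, hpi.2.1, one_mul] at hmean
  simp only [mul_sum, ← mul_assoc] at hmean
  unfold chainEntropy
  linarith

end SquaredChain

end Chain

theorem L_between_zero_and_entropy_general [Fintype V] (P : Matrix V V ℝ)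
    (hP : IsStochastic P) (pi : V → ℝ) (hpi : IsStationaryChain P pi)
    (lam : ℝ) (φ : V → ℝ) (hφ : ∀ v, 0 < φ v)
    (heig : ∀ u, ∑ v, (P u v) ^ 2 * φ v = lam * φ u) :
    0 ≤ -Real.log lam ∧ -Real.log lam ≤ chainEntropy P pi := by
  have := hpi.nonempty
  have hsq_nonneg : ∀ u v, 0 ≤ P u v ^ 2 := fun u v => sq_nonneg _
  obtain ⟨u, v, huv⟩ : ∃ u v, 0 < P u v := ⟨Classical.arbitrary V, hP.exists_pos _⟩
  have hlam_pos : 0 < lam := eigenvalue_pos_of_pos_eigenvector hsq_nonneg hφ heig (pow_pos huv 2)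
  have hlam_le : lam ≤ 1 := eigenvalue_le_one_of_rowSum_le_one hsq_nonneg hP.sum_sq_le_one hφ heig
  exact ⟨neg_nonneg.mpr (Real.log_nonpos hlam_pos.le hlam_le),
    hP.neg_log_le_chainEntropy hpi hφ hlam_pos heig⟩

/-- `0 ≤ L(V,P) ≤ h(V,P)`, where `L(V,P) = -log λ`, `λ` the Perron eigenvalue of
`Q(u,v) = P(u,v)²`, and `h(V,P) = -Σ_{u,v} π(u) P(u,v) log P(u,v)`. -/
theorem L_between_zero_and_entropy [Fintype V] [DecidableEq V] (P : Matrix V V ℝ)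
    (hP : IsStochastic P) (hmix : IsMixing P) (pi : V → ℝ) (hpi : IsStationaryChain P pi)
    (lam : ℝ) (φ : V → ℝ) (hφ : ∀ v, 0 < φ v)
    (heig : ∀ u, ∑ v, (P u v) ^ 2 * φ v = lam * φ u) :
    0 ≤ -Real.log lam ∧ -Real.log lam ≤ chainEntropy P pi :=
  L_between_zero_and_entropy_general P hP pi hpi lam φ hφ heig
end
end
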